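/- arXiv:0710.4300 — 2 statements merged into one kernel-verified Lean document; each statement's English description precedes it below -/
import Mathlib

section
/- Let V be a free abelian group and let a1, a2 be two distinct elements of a basis of V. Then the map from the exterior algebra of V/(a1 - a2) to the exterior algebra of V sending a class [w] to (a1 - a2) ∧ w (for any lift w of [w]) is a well-defined injective group homomorphism. -/
open ExteriorAlgebra

/-!
Write `d = a1 - a2` and let `f` be the coordinate of `a1`, so that `f d = 1`. The transvection
`g = id - f ⊗ d` kills `d`, hence factors through a section `s` of the quotient map `π`.
Since `ι d * ι d = 0`, left multiplication by `ι d` does not see the difference between `w` and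
`map g w`, so `F = ι d * map s (·)` satisfies `F [w] = ι d * w`. Contracting with `f` and then
applying `map π` is a left inverse of `F`, because `f ⌋ (ι d * y) = y - ι d * (f ⌋ y)` and
`π d = 0`.
-/

namespace ExteriorAlgebra

variable {R M N : Type*} [CommRing R] [AddCommGroup M] [Module R M] [AddCommGroup N] [Module R N]

theorem ι_mul_eq_involute_mul (d : M) (x : ExteriorAlgebra R M) :
    ι R d * x = CliffordAlgebra.involute x * ι R d := by
  induction x using CliffordAlgebra.induction with
  | algebraMap r => rw [CliffordAlgebra.involute.commutes, Algebra.commutes]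
  | ι m =>
    rw [CliffordAlgebra.involute_ι, neg_mul, eq_neg_iff_add_eq_zero]
    exact ι_add_mul_swap d m
  | add x y hx hy => rw [mul_add, map_add, add_mul, hx, hy]
  | mul x y hx hy => rw [map_mul, ← mul_assoc, hx, mul_assoc, hy, mul_assoc]

theorem ι_mul_map_transvection (f : M →ₗ[R] R) (d : M) (x : ExteriorAlgebra R M) :
    ι R d * map (LinearMap.id - f.smulRight d) x = ι R d * x := by
  induction x using CliffordAlgebra.induction with
  | algebraMap r => rw [AlgHom.commutes]
  | ι m =>
    rw [map_apply_ι, LinearMap.sub_apply, LinearMap.smulRight_apply, LinearMap.id_apply,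
      map_sub, map_smul, mul_sub, mul_smul_comm, ι_sq_zero, smul_zero, sub_zero]
  | add x y hx hy => rw [map_add, mul_add, mul_add, hx, hy]
  | mul x y hx hy =>
    have hx' : CliffordAlgebra.involute (map (LinearMap.id - f.smulRight d) x) * ι R d =
        CliffordAlgebra.involute x * ι R d := by
      rw [← ι_mul_eq_involute_mul, ← ι_mul_eq_involute_mul, hx]
    rw [map_mul, ← mul_assoc, ι_mul_eq_involute_mul, mul_assoc, hy, ← mul_assoc, hx',
      ← ι_mul_eq_involute_mul, mul_assoc]

/-- The hypotheses make `π` a split surjection with kernel `R ∙ d`. -/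
theorem exists_injective_map_eq_ι_mul (π : M →ₗ[R] N) (s : N →ₗ[R] M) (f : M →ₗ[R] R)
    (d : M) (hfd : f d = 1) (hπs : π ∘ₗ s = LinearMap.id)
    (hsπ : s ∘ₗ π = LinearMap.id - f.smulRight d) :
    ∃ F : ExteriorAlgebra R N →ₗ[R] ExteriorAlgebra R M,
      Function.Injective F ∧ ∀ w, F (map π w) = ι R d * w := by
  have hsπd : s (π d) = 0 := by simpa [hfd] using LinearMap.congr_fun hsπ d
  have hπd : π d = 0 := by simpa [hsπd] using (LinearMap.congr_fun hπs (π d)).symm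
  let F := LinearMap.mulLeft R (ι R d) ∘ₗ (map s).toLinearMap
  have hF : ∀ x, F x = ι R d * map s x := fun _ => rfl
  refine ⟨F, Function.LeftInverse.injective
    (g := fun y => map π (CliffordAlgebra.contractLeft (Q := 0) f y)) fun x => ?_, fun w => ?_⟩
  · beta_reduce
    rw [hF, CliffordAlgebra.contractLeft_ι_mul, hfd, one_smul, map_sub, map_mul, map_apply_ι,
      hπd, map_zero, zero_mul, sub_zero, ← AlgHom.comp_apply, map_comp_map, hπs, map_id,
      AlgHom.id_apply]
  · rw [hF, ← AlgHom.comp_apply, map_comp_map, hsπ, ι_mul_map_transvection]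

end ExteriorAlgebra

namespace QuotientAddGroup

variable {V : Type*} [AddCommGroup V]

theorem exists_section_mk'_zmultiples (f : V →ₗ[ℤ] ℤ) {d : V} (hfd : f d = 1) :
    ∃ s : V ⧸ AddSubgroup.zmultiples d →ₗ[ℤ] V,
      (mk' (AddSubgroup.zmultiples d)).toIntLinearMap ∘ₗ s = LinearMap.id ∧
      s ∘ₗ (mk' (AddSubgroup.zmultiples d)).toIntLinearMap = LinearMap.id - f.smulRight d := by
  let g : V →ₗ[ℤ] V := LinearMap.id - f.smulRight d
  have hg : ∀ v, g v = v - f v • d := fun _ => rfl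
  have hgd : AddSubgroup.zmultiples d ≤ g.toAddMonoidHom.ker := by
    rintro _ ⟨n, rfl⟩
    simp only [AddMonoidHom.mem_ker, LinearMap.toAddMonoidHom_coe, map_zsmul, hg, hfd,
      one_smul, sub_self, smul_zero]
  refine ⟨(lift _ g.toAddMonoidHom hgd).toIntLinearMap, LinearMap.ext fun x => ?_, rfl⟩
  obtain ⟨v, rfl⟩ := mk'_surjective _ x
  change ((g v : V) : V ⧸ AddSubgroup.zmultiples d) = v
  rw [hg, QuotientAddGroup.eq, neg_sub, sub_add_cancel]
  exact AddSubgroup.zsmul_mem _ (AddSubgroup.mem_zmultiples d) _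

end QuotientAddGroup

/-- Let `V` be a free abelian group with basis `b`, and `a1 = b i`,
`a2 = b j` two distinct basis elements.  The map from the exterior algebra (over ℤ) of
`V ⧸ (a1 - a2)` to the exterior algebra of `V` sending the class of `w` to
`(a1 - a2) ∧ w` is a well-defined injective group homomorphism.  Well-definedness
is expressed by the existence of an additive (ℤ-linear) map `F` satisfying
`F [w] = (a1 - a2) ∧ w` for every lift `w` (the quotient algebra map being
surjective, this determines `F` on everything). -/
theorem stmt0 {ι V : Type*} [AddCommGroup V]
    (b : Module.Basis ι ℤ V) (i j : ι) (hij : i ≠ j) :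
    ∃ F : ExteriorAlgebra ℤ (V ⧸ AddSubgroup.zmultiples (b i - b j)) →ₗ[ℤ]
        ExteriorAlgebra ℤ V,
      Function.Injective F ∧
      ∀ w : ExteriorAlgebra ℤ V,
        F (ExteriorAlgebra.map
            (QuotientAddGroup.mk' (AddSubgroup.zmultiples (b i - b j))).toIntLinearMap w) =
          ExteriorAlgebra.ι ℤ (b i - b j) * w := by
  have hcoord : b.coord i (b i - b j) = 1 := by
    simp [Module.Basis.coord_apply, hij.symm]
  obtain ⟨s, hπs, hsπ⟩ := QuotientAddGroup.exists_section_mk'_zmultiples _ hcoord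
  exact exists_injective_map_eq_ι_mul _ s _ _ hcoord hπs hsπ
end

section
/- Let V be a free abelian group with a fixed basis, and let a be a basis element. Let Λ̄*V denote the subalgebra of Λ*V generated by the kernel of the augmentation map V → ℤ sending each basis element to 1. Then the map w ↦ a ∧ w restricts to an isomorphism of graded abelian groups from Λ̄*V onto the subgroup a ∧ Λ*V of Λ*V. -/
/-!
Let `f` be a linear form with `f a = 1`. Contraction with `f` is an antiderivation `D` of the
exterior algebra; it kills every generator `ι k` with `f k = 0`, hence the whole subalgebra `K`
they generate, and so `D (a ∧ x) = x` for `x ∈ K`: wedging with `a` is injective on `K`.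
Since `ι v = ι (v - f v • a) + f v • ι a`, every element of the exterior algebra is of the form
`u + a ∧ u'` with `u, u' ∈ K`, and `a ∧ a = 0` gives `a ∧ (u + a ∧ u') = a ∧ u`.
-/

open ExteriorAlgebra

namespace ExteriorAlgebra

variable {R M : Type*} [CommRing R] [AddCommGroup M] [Module R M] (f : M →ₗ[R] R)

/-- The paper's `Λ̄*M` (for `f` the augmentation). -/
def kerSubalgebra : Subalgebra R (ExteriorAlgebra R M) :=
  Algebra.adjoin R (ι R '' LinearMap.ker f)

variable {f}

theorem ι_sub_smul_mem_kerSubalgebra {a : M} (ha : f a = 1) (v : M) :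
    ι R (v - f v • a) ∈ kerSubalgebra f :=
  Algebra.subset_adjoin ⟨_, by simp [ha], rfl⟩

theorem contractLeft_mul_eq_zero_of_mem_kerSubalgebra {x : ExteriorAlgebra R M}
    (hx : x ∈ kerSubalgebra f) {m : ExteriorAlgebra R M}
    (hm : CliffordAlgebra.contractLeft (Q := 0) f m = 0) :
    CliffordAlgebra.contractLeft (Q := 0) f (x * m) = 0 := by
  induction hx using Algebra.adjoin_induction generalizing m with
  | mem y hy =>
    obtain ⟨k, hk, rfl⟩ := hy
    rw [CliffordAlgebra.contractLeft_ι_mul, LinearMap.mem_ker.mp hk, zero_smul, hm, mul_zero,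
      sub_zero]
  | algebraMap r => rw [CliffordAlgebra.contractLeft_algebraMap_mul, hm, mul_zero]
  | add x y _ _ ihx ihy => rw [add_mul, map_add, ihx hm, ihy hm, add_zero]
  | mul x y _ _ ihx ihy => rw [mul_assoc]; exact ihx (ihy hm)

theorem contractLeft_eq_zero_of_mem_kerSubalgebra {x : ExteriorAlgebra R M}
    (hx : x ∈ kerSubalgebra f) : CliffordAlgebra.contractLeft (Q := 0) f x = 0 := by
  simpa using
    contractLeft_mul_eq_zero_of_mem_kerSubalgebra hx (CliffordAlgebra.contractLeft_one _ f)

theorem contractLeft_ι_mul_of_mem_kerSubalgebra {a : M} (ha : f a = 1) {x : ExteriorAlgebra R M}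
    (hx : x ∈ kerSubalgebra f) : CliffordAlgebra.contractLeft (Q := 0) f (ι R a * x) = x := by
  rw [CliffordAlgebra.contractLeft_ι_mul, ha, one_smul,
    contractLeft_eq_zero_of_mem_kerSubalgebra hx, mul_zero, sub_zero]

theorem injOn_ι_mul_kerSubalgebra {a : M} (ha : f a = 1) :
    Set.InjOn (ι R a * ·) (kerSubalgebra f : Set (ExteriorAlgebra R M)) :=
  Set.LeftInvOn.injOn fun _ hx => contractLeft_ι_mul_of_mem_kerSubalgebra ha hx

theorem exists_mem_kerSubalgebra_eq_add_ι_mul {a : M} (ha : f a = 1) (w : ExteriorAlgebra R M) :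
    ∃ u ∈ kerSubalgebra f, ∃ u' ∈ kerSubalgebra f, w = u + ι R a * u' := by
  induction w using CliffordAlgebra.left_induction with
  | algebraMap r => exact ⟨_, Subalgebra.algebraMap_mem _ r, 0, Subalgebra.zero_mem _, by simp⟩
  | add x y hx hy =>
    obtain ⟨u, hu, u', hu', rfl⟩ := hx
    obtain ⟨t, ht, t', ht', rfl⟩ := hy
    exact ⟨u + t, add_mem hu ht, u' + t', add_mem hu' ht', by rw [mul_add]; abel⟩
  | ι_mul x v hx =>
    obtain ⟨u, hu, u', hu', rfl⟩ := hx
    set k := ι R (v - f v • a)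
    have hk : k ∈ kerSubalgebra f := ι_sub_smul_mem_kerSubalgebra ha v
    have hv : ι R v = k + f v • ι R a := by simp [k]
    have hka : k * ι R a = -(ι R a * k) := eq_neg_of_add_eq_zero_left (ι_add_mul_swap _ _)
    refine ⟨k * u, mul_mem hk hu, f v • u - k * u', sub_mem (Subalgebra.smul_mem _ hu _)
      (mul_mem hk hu'), ?_⟩
    rw [hv, add_mul, mul_add, mul_add, smul_mul_assoc, smul_mul_assoc, ← mul_assoc k,
      ← mul_assoc (ι R a), ι_sq_zero, hka, mul_sub, mul_smul_comm]
    simp only [zero_mul, smul_zero, add_zero, neg_mul, mul_assoc]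
    abel

theorem image_ι_mul_kerSubalgebra {a : M} (ha : f a = 1) :
    (ι R a * ·) '' (kerSubalgebra f : Set (ExteriorAlgebra R M)) = Set.range (ι R a * ·) := by
  refine subset_antisymm (Set.image_subset_range _ _) ?_
  rintro _ ⟨w, rfl⟩
  obtain ⟨u, hu, u', _, rfl⟩ := exists_mem_kerSubalgebra_eq_add_ι_mul ha w
  exact ⟨u, hu, by dsimp only; rw [mul_add, ← mul_assoc, ι_sq_zero, zero_mul, add_zero]⟩

end ExteriorAlgebra

/-- Let `V` be a free abelian group with basis `b`, and `a = b i` a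
basis element.  Let `Λ̄*V` be the subalgebra of the exterior algebra `Λ*V` (over ℤ)
generated by the kernel of the augmentation map `V → ℤ` sending each basis element
to `1`.  Then the map `w ↦ a ∧ w` restricts to a bijection (an isomorphism of abelian
groups, since the map is additive) from `Λ̄*V` onto the subgroup `a ∧ Λ*V ⊆ Λ*V`. -/
theorem stmt10 {ι V : Type*} [AddCommGroup V]
    (b : Module.Basis ι ℤ V) (i : ι)
    (aug : V →ₗ[ℤ] ℤ) (haug : ∀ k, aug (b k) = 1) :
    Set.InjOn (fun w => ExteriorAlgebra.ι ℤ (b i) * w)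
        (Algebra.adjoin ℤ (⇑(ExteriorAlgebra.ι ℤ (M := V)) '' ↑(LinearMap.ker aug)) :
          Set (ExteriorAlgebra ℤ V)) ∧
      (fun w => ExteriorAlgebra.ι ℤ (b i) * w) ''
          (Algebra.adjoin ℤ (⇑(ExteriorAlgebra.ι ℤ (M := V)) '' ↑(LinearMap.ker aug)) :
            Set (ExteriorAlgebra ℤ V)) =
        {x | ∃ w : ExteriorAlgebra ℤ V, x = ExteriorAlgebra.ι ℤ (b i) * w} := by
  refine ⟨injOn_ι_mul_kerSubalgebra (haug i), (image_ι_mul_kerSubalgebra (haug i)).trans ?_⟩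
  ext x
  exact exists_congr fun w => eq_comm
end
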